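/- For the Gaussian noise density with variance σ², the closed-form RDP of the subsampled shifted mechanism with unit-norm shift vector ψ (‖ψ‖₂ = 1) and sampling rate q at integer order α satisfies ε(α; q, ψ) ≤ (1/(α−1)) log Σ_{k=0}^α C(α,k) q^k (1−q)^{α−k} exp(k(k−1)/(2σ²)), with equality when all the shift mass is in one coordinate. -/

import Mathlib

/-!
Write `p₀`, `p₁` for the product Gaussian densities with means `0` and `ψ`. Expanding
`((1 - q) p₀ + q p₁) / p₀ = (1 - q) + q (p₁ / p₀)` binomially turns the integral into
`∑ₖ C(α, k) qᵏ (1 - q)^(α - k) ∫ (p₁ / p₀)ᵏ p₀`. Each moment factorizes over the coordinates, and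
in one coordinate completing the square gives `(g_μ / g_0)ᵏ g_0 = exp (k (k - 1) μ² / (2σ²)) g_{kμ}`,
so the `k`-th moment is `exp (k (k - 1) ‖ψ‖² / (2σ²))`. With `‖ψ‖ = 1` the integral equals the
sum on the right exactly.
-/

open MeasureTheory Real
noncomputable section

/-- The Gaussian density with standard deviation σ and mean μ. -/
def gauss (σ μ x : ℝ) : ℝ :=
  Real.exp (-(x - μ)^2 / (2*σ^2)) / Real.sqrt (2*Real.pi*σ^2)

open Finset

lemma gauss_eq_gaussianPDFReal (σ μ : ℝ) :
    gauss σ μ = ProbabilityTheory.gaussianPDFReal μ ⟨σ ^ 2, sq_nonneg σ⟩ := by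
  funext x
  rw [gauss, div_eq_inv_mul]
  rfl

lemma gauss_pos {σ : ℝ} (hσ : σ ≠ 0) (μ x : ℝ) : 0 < gauss σ μ x :=
  div_pos (exp_pos _) (sqrt_pos.2 (by positivity))

lemma integrable_gauss (σ μ : ℝ) : Integrable (gauss σ μ) := by
  rw [gauss_eq_gaussianPDFReal]
  exact ProbabilityTheory.integrable_gaussianPDFReal _ _

lemma integral_gauss {σ : ℝ} (hσ : σ ≠ 0) (μ : ℝ) : ∫ x, gauss σ μ x = 1 := by
  rw [gauss_eq_gaussianPDFReal]
  refine ProbabilityTheory.integral_gaussianPDFReal_eq_one μ fun h => ?_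
  exact pow_ne_zero 2 hσ (congrArg NNReal.toReal h)

lemma gauss_div_gauss_pow_mul {σ : ℝ} (hσ : σ ≠ 0) (μ : ℝ) (k : ℕ) (x : ℝ) :
    (gauss σ μ x / gauss σ 0 x) ^ k * gauss σ 0 x
      = exp (k * (k - 1) * μ ^ 2 / (2 * σ ^ 2)) * gauss σ (k * μ) x := by
  have hZ : sqrt (2 * π * σ ^ 2) ≠ 0 := (sqrt_pos.2 (by positivity)).ne'
  simp only [gauss, div_div_div_cancel_right₀ hZ, ← exp_sub, ← exp_nat_mul, ← mul_div_assoc,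
    ← exp_add]
  congr 2
  field_simp
  ring

lemma integrable_gauss_div_gauss_pow_mul {σ : ℝ} (hσ : σ ≠ 0) (μ : ℝ) (k : ℕ) :
    Integrable fun x => (gauss σ μ x / gauss σ 0 x) ^ k * gauss σ 0 x := by
  simp_rw [gauss_div_gauss_pow_mul hσ μ k]
  exact (integrable_gauss σ _).const_mul _

lemma integral_gauss_div_gauss_pow_mul {σ : ℝ} (hσ : σ ≠ 0) (μ : ℝ) (k : ℕ) :
    ∫ x, (gauss σ μ x / gauss σ 0 x) ^ k * gauss σ 0 x
      = exp (k * (k - 1) * μ ^ 2 / (2 * σ ^ 2)) := by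
  simp_rw [gauss_div_gauss_pow_mul hσ μ k]
  rw [integral_const_mul, integral_gauss hσ, mul_one]

section ProductGaussian

variable {ι : Type*} [Fintype ι] {σ : ℝ}

lemma prod_div_prod_pow_mul_prod {K : Type*} [Field K] (f g : ι → K) (k : ℕ) :
    ((∏ i, f i) / ∏ i, g i) ^ k * ∏ i, g i = ∏ i, (f i / g i) ^ k * g i := by
  rw [← prod_div_distrib, ← prod_pow, ← prod_mul_distrib]

lemma integrable_pi_gauss_div_gauss_pow_mul (hσ : σ ≠ 0) (ψ : ι → ℝ) (k : ℕ) :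
    Integrable fun x : ι → ℝ =>
      ((∏ i, gauss σ (ψ i) (x i)) / ∏ i, gauss σ 0 (x i)) ^ k * ∏ i, gauss σ 0 (x i) := by
  simp_rw [prod_div_prod_pow_mul_prod]
  exact Integrable.fintype_prod fun i => integrable_gauss_div_gauss_pow_mul hσ (ψ i) k

lemma integral_pi_gauss_div_gauss_pow_mul (hσ : σ ≠ 0) (ψ : ι → ℝ) (k : ℕ) :
    ∫ x : ι → ℝ, ((∏ i, gauss σ (ψ i) (x i)) / ∏ i, gauss σ 0 (x i)) ^ k * ∏ i, gauss σ 0 (x i)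
      = exp (k * (k - 1) * (∑ i, ψ i ^ 2) / (2 * σ ^ 2)) := by
  simp_rw [prod_div_prod_pow_mul_prod]
  rw [volume_pi, integral_fintype_prod_eq_prod
    (f := fun i x => (gauss σ (ψ i) x / gauss σ 0 x) ^ k * gauss σ 0 x)]
  simp_rw [integral_gauss_div_gauss_pow_mul hσ, ← exp_sum, ← sum_div, ← mul_sum]

end ProductGaussian

lemma mixture_div_pow_mul_eq_sum {K : Type*} [Field K] {p : K} (hp : p ≠ 0) (q r : K) (α : ℕ) :
    (((1 - q) * p + q * r) / p) ^ α * p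
      = ∑ k ∈ range (α + 1), (α.choose k : K) * q ^ k * (1 - q) ^ (α - k) * ((r / p) ^ k * p) := by
  have hsplit : ((1 - q) * p + q * r) / p = q * (r / p) + (1 - q) := by
    field_simp
    ring
  rw [hsplit, add_pow, sum_mul]
  refine sum_congr rfl fun k _ => ?_
  ring

lemma integral_pi_gauss_mixture_div_rpow_mul (n : ℕ) {σ : ℝ} (hσ : σ ≠ 0) (ψ : Fin n → ℝ)
    (q : ℝ) (α : ℕ) :
    ∫ x : Fin n → ℝ,
      (((1-q) * ∏ i, gauss σ 0 (x i) + q * ∏ i, gauss σ (ψ i) (x i))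
          / ∏ i, gauss σ 0 (x i)) ^ (α:ℝ) * ∏ i, gauss σ 0 (x i)
    = ∑ k ∈ range (α + 1), (α.choose k : ℝ) * q ^ k * (1 - q) ^ (α - k) *
        exp (k * (k - 1) * (∑ i, ψ i ^ 2) / (2 * σ ^ 2)) := by
  have hp (x : Fin n → ℝ) : ∏ i, gauss σ 0 (x i) ≠ 0 :=
    (prod_pos fun i _ => gauss_pos hσ 0 (x i)).ne'
  simp_rw [rpow_natCast, mixture_div_pow_mul_eq_sum (hp _)]
  rw [integral_finsetSum _ fun k _ =>
    (integrable_pi_gauss_div_gauss_pow_mul hσ ψ k).const_mul _]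
  simp_rw [integral_const_mul, integral_pi_gauss_div_gauss_pow_mul hσ]

theorem subsampled_gaussian_bound_general (n : ℕ) (σ : ℝ) (hσ : 0 < σ)
    (ψ : Fin n → ℝ) (hψ : ∑ i, (ψ i)^2 = 1)
    (q : ℝ) (α : ℕ) :
    (1/((α:ℝ)-1)) * Real.log (∫ x : Fin n → ℝ,
      (((1-q) * ∏ i, gauss σ 0 (x i) + q * ∏ i, gauss σ (ψ i) (x i))
          / ∏ i, gauss σ 0 (x i)) ^ (α:ℝ) * ∏ i, gauss σ 0 (x i))
    ≤ (1/((α:ℝ)-1)) * Real.log (∑ k ∈ Finset.range (α+1),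
        (α.choose k : ℝ) * q^k * (1-q)^(α-k) *
          Real.exp ((k:ℝ) * ((k:ℝ)-1) / (2*σ^2))) := by
  rw [integral_pi_gauss_mixture_div_rpow_mul n hσ.ne' ψ q α, hψ]
  simp only [mul_one, le_refl]

/-- Closed-form RDP bound for the subsampled Gaussian mechanism with unit-norm
shift ψ: the order-α Rényi divergence of the mixture against the baseline is at
most (1/(α−1)) log Σ C(α,k) qᵏ(1−q)^{α−k} exp(k(k−1)/(2σ²)). -/
theorem subsampled_gaussian_bound (n : ℕ) (σ : ℝ) (hσ : 0 < σ)
    (ψ : Fin n → ℝ) (hψ : ∑ i, (ψ i)^2 = 1)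
    (q : ℝ) (hq : q ∈ Set.Icc (0:ℝ) 1) (α : ℕ) (hα : 2 ≤ α) :
    (1/((α:ℝ)-1)) * Real.log (∫ x : Fin n → ℝ,
      (((1-q) * ∏ i, gauss σ 0 (x i) + q * ∏ i, gauss σ (ψ i) (x i))
          / ∏ i, gauss σ 0 (x i)) ^ (α:ℝ) * ∏ i, gauss σ 0 (x i))
    ≤ (1/((α:ℝ)-1)) * Real.log (∑ k ∈ Finset.range (α+1),
        (α.choose k : ℝ) * q^k * (1-q)^(α-k) *
          Real.exp ((k:ℝ) * ((k:ℝ)-1) / (2*σ^2))) :=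
  subsampled_gaussian_bound_general n σ hσ ψ hψ q α
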